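/- arXiv:1506.03479 — 6 statements merged into one kernel-verified Lean document; each statement's English description precedes it below -/
import Mathlib

section
/- Consider a two-arc composite equilibrium where each atomic player i with weight Tⁱ > 0 and flow (xⁱ₁, xⁱ₂) with xⁱ₁ + xⁱ₂ = Tⁱ satisfies, for each arc r, the condition: xⁱ_r > 0 implies c_r(ξ_r) + xⁱ_r·c_r′(ξ_r) = min over s of (c_s(ξ_s) + xⁱ_s·c_s′(ξ_s)), where ξ_r is the aggregate weight on arc r and c₁′, c₂′ > 0. If two atomic players i, j satisfy Tⁱ ≥ Tʲ, then xⁱ_r ≥ xʲ_r for each arc r, with equality if and only if Tⁱ = Tʲ or xⁱ_r = xʲ_r = 0. -/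
/-!
Player `i`'s marginal cost on arc `r` is `c_r(ξ_r) + xⁱ_r c_r'(ξ_r)`. If player `j` uses arc `r`
and player `i` uses arc `s`, then adding `j`'s equilibrium inequality (`r` no dearer than `s`) to
`i`'s (`s` no dearer than `r`) cancels the common terms `c_r(ξ_r), c_s(ξ_s)` and leaves
`(xʲ_r - xⁱ_r) c_r' + (xⁱ_s - xʲ_s) c_s' ≤ 0`. With two arcs and `Tʲ ≤ Tⁱ`, a player `j` with more
flow than `i` on one arc has less on the other, which makes the left side positive.
-/

section MarginalCost

variable {ι α : Type*} {a b : α → ℝ} {x : ι → α → ℝ} {T : ι → ℝ}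

/-- `a r` and `b r` stand for `c_r(ξ_r)` and `c_r'(ξ_r)` at the equilibrium aggregate flow `ξ`. -/
def IsMarginalCostEquilibrium (a b : α → ℝ) (x : ι → α → ℝ) : Prop :=
  ∀ i r, 0 < x i r → ∀ s, a r + x i r * b r ≤ a s + x i s * b s

namespace IsMarginalCostEquilibrium

theorem crossing_nonpos (hE : IsMarginalCostEquilibrium a b x) {i j : ι} {r s : α}
    (hj : 0 < x j r) (hi : 0 < x i s) :
    (x j r - x i r) * b r + (x i s - x j s) * b s ≤ 0 := by
  have hjr := hE j r hj s
  have his := hE i s hi r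
  linarith

variable (hE : IsMarginalCostEquilibrium a b x) (hx : ∀ k r, 0 ≤ x k r) (hb : ∀ r, 0 < b r)
  {i j : ι} {r s : α} (hi : x i r + x i s = T i) (hj : x j r + x j s = T j)
include hE hx hb hi hj

theorem flow_le_of_weight_le (hij : T j ≤ T i) : x j r ≤ x i r := by
  by_contra! hr
  have hs : x j s < x i s := by linarith
  have := hE.crossing_nonpos ((hx i r).trans_lt hr) ((hx j s).trans_lt hs)
  nlinarith [mul_pos (sub_pos.2 hr) (hb r), mul_pos (sub_pos.2 hs) (hb s)]

theorem flow_eq_iff (hij : T j ≤ T i) :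
    x i r = x j r ↔ T i = T j ∨ (x i r = 0 ∧ x j r = 0) := by
  constructor
  · intro he
    rcases hij.eq_or_lt with hT | hT
    · exact Or.inl hT.symm
    · have hs : x j s < x i s := by linarith
      have hj0 : x j r = 0 := by
        by_contra hne
        have := hE.crossing_nonpos ((hx j r).lt_of_ne' hne) ((hx j s).trans_lt hs)
        rw [he, sub_self, zero_mul, zero_add] at this
        nlinarith [mul_pos (sub_pos.2 hs) (hb s)]
      exact Or.inr ⟨he.trans hj0, hj0⟩
  · rintro (hT | ⟨hi0, hj0⟩)
    · exact le_antisymm (flow_le_of_weight_le hE hx hb hj hi hT.le)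
        (flow_le_of_weight_le hE hx hb hi hj hij)
    · rw [hi0, hj0]

end IsMarginalCostEquilibrium

end MarginalCost

theorem Fin.two_exists_complementary {ι : Type*} {x : ι → Fin 2 → ℝ} {T : ι → ℝ}
    (hsum : ∀ k, x k 0 + x k 1 = T k) (r : Fin 2) : ∃ s, ∀ k, x k r + x k s = T k := by
  fin_cases r
  · exact ⟨1, hsum⟩
  · exact ⟨0, fun k => (add_comm _ _).trans (hsum k)⟩

theorem larger_player_larger_flow_general
    (N : ℕ) (c d : Fin 2 → ℝ → ℝ) (T : Fin N → ℝ) (x : Fin N → Fin 2 → ℝ)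
    (hxnn : ∀ i r, 0 ≤ x i r)
    (hsum : ∀ i, x i 0 + x i 1 = T i)
    (hdpos : ∀ r t, 0 < d r t)
    (ξ : Fin 2 → ℝ)
    (heq : ∀ i r, 0 < x i r →
      ∀ s, c r (ξ r) + x i r * d r (ξ r) ≤ c s (ξ s) + x i s * d s (ξ s))
    (i j : Fin N) (hij : T j ≤ T i) :
    ∀ r, x j r ≤ x i r ∧ (x i r = x j r ↔ T i = T j ∨ (x i r = 0 ∧ x j r = 0)) := by
  intro r
  obtain ⟨s, hs⟩ := Fin.two_exists_complementary hsum r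
  have hE : IsMarginalCostEquilibrium (fun r => c r (ξ r)) (fun r => d r (ξ r)) x := heq
  have hb : ∀ r, 0 < d r (ξ r) := fun r => hdpos r _
  exact ⟨hE.flow_le_of_weight_le hxnn hb (hs i) (hs j) hij,
    hE.flow_eq_iff hxnn hb (hs i) (hs j) hij⟩

/-- at a two-arc composite equilibrium, a larger atomic player puts weakly
more weight on every arc, with equality iff equal weights or both flows vanish. -/
theorem larger_player_larger_flow
    (N : ℕ) (c d : Fin 2 → ℝ → ℝ) (T : Fin N → ℝ) (x : Fin N → Fin 2 → ℝ)
    (hT : ∀ i, 0 < T i)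
    (hxnn : ∀ i r, 0 ≤ x i r)
    (hsum : ∀ i, x i 0 + x i 1 = T i)
    (hdpos : ∀ r t, 0 < d r t)
    (ξ : Fin 2 → ℝ) (hξ : ∀ r, ξ r = ∑ i, x i r)
    (heq : ∀ i r, 0 < x i r →
      ∀ s, c r (ξ r) + x i r * d r (ξ r) ≤ c s (ξ s) + x i s * d s (ξ s))
    (i j : Fin N) (hij : T j ≤ T i) :
    ∀ r, x j r ≤ x i r ∧ (x i r = x j r ↔ T i = T j ∨ (x i r = 0 ∧ x j r = 0)) :=
  larger_player_larger_flow_general N c d T x hxnn hsum hdpos ξ heq i j hij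
end

section
/- Let c₁, c₂ : ℝ → ℝ be increasing with nondecreasing derivatives (convex, C¹, strictly increasing) and suppose numbers ξ̄₁ ∈ [0, M], x̄₁ ∈ [0, ξ̄₁] satisfy c₁(ξ̄₁) ≤ c₂(M − ξ̄₁) and c₁(ξ̄₁) + x̄₁·c₁′(ξ̄₁) ≤ c₂(M − ξ̄₁) + (T^N − x̄₁)·c₂′(M − ξ̄₁), where 0 ≤ x̄₁ ≤ T^N ≤ M. Then for all s ∈ [0, Δξ] with 0 ≤ Δξ ≤ ξ̄₁: (i) c₁(ξ̄₁ − s) ≤ c₂(M − ξ̄₁ + s), and (ii) c₁(ξ̄₁ − s) + (x̄₁ − s)·c₁′(ξ̄₁ − s) ≤ c₂(M − ξ̄₁ + s) + (T^N − x̄₁ + s)·c₂′(M − ξ̄₁ + s) whenever x̄₁ − s ≥ 0. -/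
/-! Shifting weight `s` from arc 1 to arc 2 lowers the load and flow on arc 1 and raises them
on arc 2. Costs `c` and, since `c'` is nondecreasing and nonnegative, marginal costs
`c + x * c'` are monotone in both, so the left sides only drop and the right sides only grow. -/

lemma add_mul_le_add_mul_of_monotone {c d : ℝ → ℝ} (hc : Monotone c) (hd : Monotone d)
    {x x' ξ ξ' : ℝ} (hx : 0 ≤ x) (hxx' : x ≤ x') (hξξ' : ξ ≤ ξ') (hdξ' : 0 ≤ d ξ') :
    c ξ + x * d ξ ≤ c ξ' + x' * d ξ' :=
  add_le_add (hc hξξ') (mul_le_mul_of_nonneg hxx' (hd hξξ') hx hdξ')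

theorem foc_inequalities_propagate_general
    (c₁ c₂ d₁ d₂ : ℝ → ℝ) (M TN ξbar₁ xbar₁ Δξ : ℝ)
    (hc₁mono : StrictMono c₁) (hc₂mono : StrictMono c₂)
    (hd₁mono : Monotone d₁) (hd₂mono : Monotone d₂)
    (hd₁nn : ∀ t, 0 ≤ d₁ t) (hd₂nn : ∀ t, 0 ≤ d₂ t)
    (hxbarTN : xbar₁ ≤ TN)
    (h1 : c₁ ξbar₁ ≤ c₂ (M - ξbar₁))
    (h2 : c₁ ξbar₁ + xbar₁ * d₁ ξbar₁ ≤ c₂ (M - ξbar₁) + (TN - xbar₁) * d₂ (M - ξbar₁)) :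
    ∀ s ∈ Set.Icc 0 Δξ,
      c₁ (ξbar₁ - s) ≤ c₂ (M - ξbar₁ + s) ∧
      (0 ≤ xbar₁ - s →
        c₁ (ξbar₁ - s) + (xbar₁ - s) * d₁ (ξbar₁ - s) ≤
          c₂ (M - ξbar₁ + s) + (TN - xbar₁ + s) * d₂ (M - ξbar₁ + s)) := by
  rintro s ⟨hs, -⟩
  have hload₁ : ξbar₁ - s ≤ ξbar₁ := by linarith
  have hload₂ : M - ξbar₁ ≤ M - ξbar₁ + s := by linarith
  refine ⟨(hc₁mono.monotone hload₁).trans (h1.trans (hc₂mono.monotone hload₂)), fun hxs => ?_⟩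
  calc c₁ (ξbar₁ - s) + (xbar₁ - s) * d₁ (ξbar₁ - s)
      ≤ c₁ ξbar₁ + xbar₁ * d₁ ξbar₁ :=
        add_mul_le_add_mul_of_monotone hc₁mono.monotone hd₁mono hxs (by linarith) hload₁
          (hd₁nn _)
    _ ≤ c₂ (M - ξbar₁) + (TN - xbar₁) * d₂ (M - ξbar₁) := h2
    _ ≤ c₂ (M - ξbar₁ + s) + (TN - xbar₁ + s) * d₂ (M - ξbar₁ + s) :=
        add_mul_le_add_mul_of_monotone hc₂mono.monotone hd₂mono (by linarith) (by linarith)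
          hload₂ (hd₂nn _)

/-- monotone propagation of the equilibrium first-order inequalities along
shifts of weight from arc 1 to arc 2. -/
theorem foc_inequalities_propagate
    (c₁ c₂ d₁ d₂ : ℝ → ℝ) (M TN ξbar₁ xbar₁ Δξ : ℝ)
    (hc₁mono : StrictMono c₁) (hc₂mono : StrictMono c₂)
    (hd₁ : ∀ t, HasDerivAt c₁ (d₁ t) t)
    (hd₂ : ∀ t, HasDerivAt c₂ (d₂ t) t)
    (hd₁mono : Monotone d₁) (hd₂mono : Monotone d₂)
    (hd₁nn : ∀ t, 0 ≤ d₁ t) (hd₂nn : ∀ t, 0 ≤ d₂ t)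
    (hξbar : ξbar₁ ∈ Set.Icc 0 M)
    (hxbar₁nn : 0 ≤ xbar₁) (hxbar₁le : xbar₁ ≤ ξbar₁)
    (hxbarTN : xbar₁ ≤ TN) (hTNM : TN ≤ M)
    (h1 : c₁ ξbar₁ ≤ c₂ (M - ξbar₁))
    (h2 : c₁ ξbar₁ + xbar₁ * d₁ ξbar₁ ≤ c₂ (M - ξbar₁) + (TN - xbar₁) * d₂ (M - ξbar₁))
    (hΔnn : 0 ≤ Δξ) (hΔle : Δξ ≤ ξbar₁) :
    ∀ s ∈ Set.Icc 0 Δξ,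
      c₁ (ξbar₁ - s) ≤ c₂ (M - ξbar₁ + s) ∧
      (0 ≤ xbar₁ - s →
        c₁ (ξbar₁ - s) + (xbar₁ - s) * d₁ (ξbar₁ - s) ≤
          c₂ (M - ξbar₁ + s) + (TN - xbar₁ + s) * d₂ (M - ξbar₁ + s)) :=
  foc_inequalities_propagate_general c₁ c₂ d₁ d₂ M TN ξbar₁ xbar₁ Δξ hc₁mono hc₂mono hd₁mono hd₂mono
    hd₁nn hd₂nn hxbarTN h1 h2
end

section
/- Let c₁, c₂ be strictly increasing, C¹, with positive derivatives, and let ξ₁ > ξ̄₁ be aggregate weights on arc 1 (with ξ₂ = M − ξ₁, ξ̄₂ = M − ξ̄₁). Suppose ȳ₁ > 0, ȳ₂ > 0 with ȳ₁ + ȳ₂ = T, and ȳ₁·c₁′(ȳ₁ + s) > B > ȳ₂·c₂′(ȳ₂ + t) for all s ∈ (ξ̄₁ − ȳ₁, M − ȳ₁] and t ∈ [−ȳ₂, ξ̄₂ − ȳ₂), for some constant B. Then ȳ₁·c₁(ξ₁) + ȳ₂·c₂(ξ₂) > ȳ₁·c₁(ξ̄₁) + ȳ₂·c₂(ξ̄₂).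 -/
/-! As a function of the weight `ξ` on arc 1, the cost `ȳ₁ c₁(ξ) + ȳ₂ c₂(M - ξ)` has derivative
`ȳ₁ c₁'(ξ) - ȳ₂ c₂'(M - ξ)`, and the constant `B` separates the two terms on `(ξ̄₁, M)`. So the cost
is strictly increasing on `[ξ̄₁, M]`. -/

open Set

def opponentCost (c₁ c₂ : ℝ → ℝ) (M y₁ y₂ ξ : ℝ) : ℝ :=
  y₁ * c₁ ξ + y₂ * c₂ (M - ξ)

section

variable {c₁ c₂ d₁ d₂ : ℝ → ℝ} {M y₁ y₂ : ℝ}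

theorem hasDerivAt_opponentCost (hd₁ : ∀ t, HasDerivAt c₁ (d₁ t) t)
    (hd₂ : ∀ t, HasDerivAt c₂ (d₂ t) t) (x : ℝ) :
    HasDerivAt (opponentCost c₁ c₂ M y₁ y₂) (y₁ * d₁ x - y₂ * d₂ (M - x)) x := by
  have h₂ : HasDerivAt (fun ξ => c₂ (M - ξ)) (d₂ (M - x) * (-1)) x :=
    (hd₂ (M - x)).comp x ((hasDerivAt_id x).const_sub M)
  exact (((hd₁ x).const_mul y₁).add (h₂.const_mul y₂)).congr_deriv (by ring)

theorem strictMonoOn_opponentCost (hd₁ : ∀ t, HasDerivAt c₁ (d₁ t) t)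
    (hd₂ : ∀ t, HasDerivAt c₂ (d₂ t) t) {a : ℝ}
    (h : ∀ x ∈ Ioo a M, y₂ * d₂ (M - x) < y₁ * d₁ x) :
    StrictMonoOn (opponentCost c₁ c₂ M y₁ y₂) (Icc a M) := by
  have hcost := hasDerivAt_opponentCost (M := M) (y₁ := y₁) (y₂ := y₂) hd₁ hd₂
  refine strictMonoOn_of_deriv_pos (convex_Icc a M)
    (fun x _ => (hcost x).continuousAt.continuousWithinAt) fun x hx => ?_
  rw [interior_Icc] at hx
  rw [(hcost x).deriv, sub_pos]
  exact h x hx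

end

theorem opponent_cost_strict_increase_general
    (c₁ c₂ d₁ d₂ : ℝ → ℝ) (M ξ₁ ξbar₁ ybar₁ ybar₂ B : ℝ)
    (hd₁ : ∀ t, HasDerivAt c₁ (d₁ t) t)
    (hd₂ : ∀ t, HasDerivAt c₂ (d₂ t) t)
    (hξ : ξbar₁ < ξ₁) (hξ₁ : ξ₁ ∈ Set.Icc 0 M)
    (hB1 : ∀ s ∈ Set.Ioc (ξbar₁ - ybar₁) (M - ybar₁), B < ybar₁ * d₁ (ybar₁ + s))
    (hB2 : ∀ t ∈ Set.Ico (-ybar₂) ((M - ξbar₁) - ybar₂), ybar₂ * d₂ (ybar₂ + t) < B) :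
    ybar₁ * c₁ ξbar₁ + ybar₂ * c₂ (M - ξbar₁) <
      ybar₁ * c₁ ξ₁ + ybar₂ * c₂ (M - ξ₁) := by
  have hderiv : ∀ x ∈ Ioo ξbar₁ M, ybar₂ * d₂ (M - x) < ybar₁ * d₁ x := by
    rintro x ⟨hax, hxM⟩
    have h₁ := hB1 (x - ybar₁) ⟨by linarith, by linarith⟩
    have h₂ := hB2 (M - x - ybar₂) ⟨by linarith, by linarith⟩
    rw [add_sub_cancel] at h₁ h₂
    exact h₂.trans h₁
  exact strictMonoOn_opponentCost hd₁ hd₂ hderiv ⟨le_rfl, hξ.le.trans hξ₁.2⟩ ⟨hξ.le, hξ₁.2⟩ hξ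

/-- an opponent with fixed flow (ȳ₁, ȳ₂) pays strictly more when the
aggregate weight on arc 1 rises from ξ̄₁ to ξ₁. -/
theorem opponent_cost_strict_increase
    (c₁ c₂ d₁ d₂ : ℝ → ℝ) (M T ξ₁ ξbar₁ ybar₁ ybar₂ B : ℝ)
    (hc₁mono : StrictMono c₁) (hc₂mono : StrictMono c₂)
    (hd₁ : ∀ t, HasDerivAt c₁ (d₁ t) t)
    (hd₂ : ∀ t, HasDerivAt c₂ (d₂ t) t)
    (hd₁pos : ∀ t, 0 < d₁ t) (hd₂pos : ∀ t, 0 < d₂ t)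
    (hξ : ξbar₁ < ξ₁) (hξ₁ : ξ₁ ∈ Set.Icc 0 M) (hξbar₁ : ξbar₁ ∈ Set.Icc 0 M)
    (hy₁ : 0 < ybar₁) (hy₂ : 0 < ybar₂) (hyT : ybar₁ + ybar₂ = T)
    (hB1 : ∀ s ∈ Set.Ioc (ξbar₁ - ybar₁) (M - ybar₁), B < ybar₁ * d₁ (ybar₁ + s))
    (hB2 : ∀ t ∈ Set.Ico (-ybar₂) ((M - ξbar₁) - ybar₂), ybar₂ * d₂ (ybar₂ + t) < B) :
    ybar₁ * c₁ ξbar₁ + ybar₂ * c₂ (M - ξbar₁) <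
      ybar₁ * c₁ ξ₁ + ybar₂ * c₂ (M - ξ₁) :=
  opponent_cost_strict_increase_general c₁ c₂ d₁ d₂ M ξ₁ ξbar₁ ybar₁ ybar₂ B hd₁ hd₂ hξ hξ₁ hB1 hB2
end

section
/- Let h be strictly decreasing on [0, M] and F_l(t) = (M − t)(1 + a(t)) + l·h(t) with a > 0 non-increasing, and let T¹ ≥ T² ≥ … ≥ T^{N−1} > 0 with partial sums T^{[l]} = T¹ + … + T^l. Suppose for some l ∈ {2, …, N−1}: F_l⁻¹(T^{[l]}) > h⁻¹(T^l). Then F_{l−1}⁻¹(T^{[l−1]}) > F_l⁻¹(T^{[l]}). -/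
/-!
Write `P t = (M - t)(1 + a t)`, so that `F n = P + n h`. Since `a > 0` is antitone, `P` is a
product of two nonnegative antitone functions on `[0, M]`, hence every `F n` is antitone there.
Evaluating `F (l - 1) = F l - h` at `u` and using `T^[l] = T^[l-1] + T^l` gives
`F (l - 1) u = T^[l-1] + (T^l - h u)`, and `h u < h w = T^l` because `w < u`. So
`F (l - 1) v = T^[l-1] < F (l - 1) u`, which forces `u < v` by antitonicity.
-/

open Set

lemma antitoneOn_sub_mul_one_add {a : ℝ → ℝ} {M : ℝ}
    (ha : ∀ t ∈ Icc 0 M, 0 ≤ 1 + a t) (ha_anti : AntitoneOn a (Icc 0 M)) :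
    AntitoneOn (fun t => (M - t) * (1 + a t)) (Icc 0 M) :=
  fun s hs t ht hst =>
    mul_le_mul (by linarith) (by linarith [ha_anti hs ht hst]) (ha t ht) (by linarith [hs.2])

lemma antitoneOn_sub_mul_one_add_add_nat_mul {h a : ℝ → ℝ} {M : ℝ}
    (ha : ∀ t ∈ Icc 0 M, 0 ≤ 1 + a t) (ha_anti : AntitoneOn a (Icc 0 M))
    (hh : AntitoneOn h (Icc 0 M)) (n : ℕ) :
    AntitoneOn (fun t => (M - t) * (1 + a t) + (n : ℝ) * h t) (Icc 0 M) :=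
  (antitoneOn_sub_mul_one_add ha ha_anti).add
    fun _ hs _ ht hst => mul_le_mul_of_nonneg_left (hh hs ht hst) n.cast_nonneg

lemma Finset.sum_Icc_one_eq_sum_Icc_one_sub_one_add {β : Type*} [AddCommMonoid β]
    (T : ℕ → β) {l : ℕ} (hl : 1 ≤ l) :
    ∑ i ∈ Icc 1 l, T i = ∑ i ∈ Icc 1 (l - 1), T i + T l := by
  obtain ⟨k, rfl⟩ := Nat.exists_eq_add_of_le' hl
  rw [Nat.add_sub_cancel, Finset.sum_Icc_succ_top (by omega)]

theorem equilibrium_weight_decreasing_in_l_general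
    (h a : ℝ → ℝ) (M : ℝ) (T : ℕ → ℝ)
    (hh : StrictAntiOn h (Set.Icc 0 M))
    (ha_pos : ∀ t ∈ Set.Icc 0 M, 0 < a t)
    (ha_anti : AntitoneOn a (Set.Icc 0 M))
    (F : ℕ → ℝ → ℝ)
    (hF : ∀ n t, F n t = (M - t) * (1 + a t) + (n : ℝ) * h t)
    (S : ℕ → ℝ) (hS : ∀ l, S l = ∑ i ∈ Finset.Icc 1 l, T i)
    (l : ℕ) (hl2 : 2 ≤ l)
    (u v w : ℝ)
    (hu : u ∈ Set.Icc 0 M) (hv : v ∈ Set.Icc 0 M) (hw : w ∈ Set.Icc 0 M)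
    (hFu : F l u = S l) (hFv : F (l - 1) v = S (l - 1)) (hhw : h w = T l)
    (hsplit : w < u) :
    u < v := by
  have hl1 : 1 ≤ l := by omega
  have hF_anti : AntitoneOn (F (l - 1)) (Icc 0 M) := funext (hF (l - 1)) ▸
    antitoneOn_sub_mul_one_add_add_nat_mul (fun t ht => by linarith [ha_pos t ht]) ha_anti
      hh.antitoneOn (l - 1)
  have hhu : h u < T l := hhw ▸ hh hw hu hsplit
  have hF_pred : F (l - 1) u = F l u - h u := by
    rw [hF, hF, Nat.cast_sub hl1]
    ring
  have hFv_lt_Fu : F (l - 1) v < F (l - 1) u := by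
    rw [hFv, hF_pred, hFu, hS, hS, Finset.sum_Icc_one_eq_sum_Icc_one_sub_one_add T hl1]
    linarith
  exact hF_anti.reflect_lt hv hu hFv_lt_Fu

/-- if F_l⁻¹(T^[l]) > h⁻¹(T^l), then F_{l−1}⁻¹(T^[l−1]) > F_l⁻¹(T^[l]).
Here u = F_l⁻¹(T^[l]), v = F_{l−1}⁻¹(T^[l−1]), w = h⁻¹(T^l). -/
theorem equilibrium_weight_decreasing_in_l
    (h a : ℝ → ℝ) (M : ℝ) (hM : 0 < M) (N : ℕ) (T : ℕ → ℝ)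
    (hh : StrictAntiOn h (Set.Icc 0 M))
    (ha_pos : ∀ t ∈ Set.Icc 0 M, 0 < a t)
    (ha_anti : AntitoneOn a (Set.Icc 0 M))
    (hT_pos : ∀ i, 1 ≤ i → i ≤ N - 1 → 0 < T i)
    (hT_mono : ∀ i j, 1 ≤ i → i ≤ j → j ≤ N - 1 → T j ≤ T i)
    (F : ℕ → ℝ → ℝ)
    (hF : ∀ n t, F n t = (M - t) * (1 + a t) + (n : ℝ) * h t)
    (S : ℕ → ℝ) (hS : ∀ l, S l = ∑ i ∈ Finset.Icc 1 l, T i)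
    (l : ℕ) (hl2 : 2 ≤ l) (hlN : l ≤ N - 1)
    (u v w : ℝ)
    (hu : u ∈ Set.Icc 0 M) (hv : v ∈ Set.Icc 0 M) (hw : w ∈ Set.Icc 0 M)
    (hFu : F l u = S l) (hFv : F (l - 1) v = S (l - 1)) (hhw : h w = T l)
    (hsplit : w < u) :
    u < v :=
  equilibrium_weight_decreasing_in_l_general h a M T hh ha_pos ha_anti F hF S hS l hl2 u v w hu hv
    hw hFu hFv hhw hsplit
end

section
/- Let h be strictly decreasing with inverse h⁻¹, and F_n(t) = (M − t)(1 + a(t)) + n·h(t) with a > 0. Let T¹ ≥ … ≥ T^{N−1} > 0 with partial sums T^{[l]}. Suppose for some l, F_l⁻¹(T^{[l]}) ≤ h⁻¹(T^l). Then F_{l−1}⁻¹(T^{[l−1]}) ≤ F_l⁻¹(T^{[l]}) and F_{l−1}⁻¹(T^{[l−1]}) ≤ h⁻¹(T^l). -/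
/-! Since `F (l - 1) = F l - h`, the point `u` satisfies
`F (l - 1) u = T^[l] - h u ≤ T^[l] - h w = T^[l-1] = F (l - 1) v`, using `u ≤ w` and that `h`
decreases; as `F (l - 1)` is strictly decreasing, `v ≤ u`. -/

theorem strictAntiOn_sub_mul_one_add {a : ℝ → ℝ} {M : ℝ} {s : Set ℝ} (hsM : s ⊆ Set.Iic M)
    (ha_pos : ∀ t ∈ s, 0 < 1 + a t) (ha_anti : AntitoneOn a s) :
    StrictAntiOn (fun t => (M - t) * (1 + a t)) s := by
  intro x hx y hy hxy
  calc (M - y) * (1 + a y) < (M - x) * (1 + a y) :=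
        mul_lt_mul_of_pos_right (by linarith) (ha_pos y hy)
    _ ≤ (M - x) * (1 + a x) :=
        mul_le_mul_of_nonneg_left (by linarith [ha_anti hx hy hxy.le]) (by linarith [Set.mem_Iic.mp (hsM hy)])

/-- `u`, `v`, `w` stand for `F_l⁻¹(T^[l])`, `F_{l−1}⁻¹(T^[l−1])` and `h⁻¹(T^l)`. -/
theorem backward_induction_step_general
    (h a : ℝ → ℝ) (M : ℝ) (T : ℕ → ℝ)
    (hh : StrictAntiOn h (Set.Icc 0 M))
    (ha_pos : ∀ t ∈ Set.Icc 0 M, 0 < a t)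
    (ha_anti : AntitoneOn a (Set.Icc 0 M))
    (F : ℕ → ℝ → ℝ)
    (hF : ∀ n t, F n t = (M - t) * (1 + a t) + (n : ℝ) * h t)
    (S : ℕ → ℝ) (hS : ∀ l, S l = ∑ i ∈ Finset.Icc 1 l, T i)
    (l : ℕ) (hl1 : 1 ≤ l)
    (u v w : ℝ)
    (hu : u ∈ Set.Icc 0 M) (hv : v ∈ Set.Icc 0 M) (hw : w ∈ Set.Icc 0 M)
    (hFu : F l u = S l) (hFv : F (l - 1) v = S (l - 1)) (hhw : h w = T l)
    (hnosplit : u ≤ w) :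
    v ≤ u ∧ v ≤ w := by
  obtain ⟨m, rfl⟩ : ∃ m, l = m + 1 := ⟨l - 1, by omega⟩
  rw [Nat.add_sub_cancel] at hFv
  have hS_succ : S (m + 1) = S m + T (m + 1) := by
    rw [hS, hS, Finset.sum_Icc_succ_top (by omega)]
  have hF_succ : F (m + 1) u = F m u + h u := by
    rw [hF, hF]; push_cast; ring
  have hhu : h w ≤ h u := hh.antitoneOn hu hw hnosplit
  have hF_anti : StrictAntiOn (F m) (Set.Icc 0 M) := by
    have hterm : AntitoneOn (fun t => (m : ℝ) * h t) (Set.Icc 0 M) := fun x hx y hy hxy =>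
      mul_le_mul_of_nonneg_left (hh.antitoneOn hx hy hxy) (Nat.cast_nonneg m)
    simpa only [funext (hF m)] using
      (strictAntiOn_sub_mul_one_add (fun t ht => ht.2)
        (fun t ht => by linarith [ha_pos t ht]) ha_anti).add_antitone hterm
  have hvu : v ≤ u := (hF_anti.le_iff_ge hu hv).mp (by linarith)
  exact ⟨hvu, hvu.trans hnosplit⟩

/-- if F_l⁻¹(T^[l]) ≤ h⁻¹(T^l), then F_{l−1}⁻¹(T^[l−1]) ≤ F_l⁻¹(T^[l])
and F_{l−1}⁻¹(T^[l−1]) ≤ h⁻¹(T^l). Here u = F_l⁻¹(T^[l]), v = F_{l−1}⁻¹(T^[l−1]),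
w = h⁻¹(T^l). -/
theorem backward_induction_step
    (h a : ℝ → ℝ) (M : ℝ) (hM : 0 < M) (N : ℕ) (T : ℕ → ℝ)
    (hh : StrictAntiOn h (Set.Icc 0 M))
    (ha_pos : ∀ t ∈ Set.Icc 0 M, 0 < a t)
    (ha_anti : AntitoneOn a (Set.Icc 0 M))
    (hT_pos : ∀ i, 1 ≤ i → i ≤ N - 1 → 0 < T i)
    (hT_mono : ∀ i j, 1 ≤ i → i ≤ j → j ≤ N - 1 → T j ≤ T i)
    (F : ℕ → ℝ → ℝ)
    (hF : ∀ n t, F n t = (M - t) * (1 + a t) + (n : ℝ) * h t)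
    (S : ℕ → ℝ) (hS : ∀ l, S l = ∑ i ∈ Finset.Icc 1 l, T i)
    (l : ℕ) (hl1 : 1 ≤ l) (hlN : l ≤ N - 1)
    (u v w : ℝ)
    (hu : u ∈ Set.Icc 0 M) (hv : v ∈ Set.Icc 0 M) (hw : w ∈ Set.Icc 0 M)
    (hFu : F l u = S l) (hFv : F (l - 1) v = S (l - 1)) (hhw : h w = T l)
    (hnosplit : u ≤ w) :
    v ≤ u ∧ v ≤ w :=
  backward_induction_step_general h a M T hh ha_pos ha_anti F hF S hS l hl1 u v w hu hv hw hFu hFv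
    hhw hnosplit
end

section
/- Let c₁, c₂ be strictly increasing, convex, C¹ on [0, M], M > 0. Suppose x₁ > x̄₁ ≥ 0 (weights of a group on arc 1, with x₂ = W − x₁ < x̄₂ = W − x̄₁), y₁ ≥ ȳ₁ (other players on arc 1, y₂ = M − W − y₁ ≤ ȳ₂), and there exist constants B, C > 0 such that: c₁(s + ȳ₁) + s·c₁′(s + ȳ₁) > B > c₂(t + ȳ₂) + t·c₂′(t + ȳ₂) for all s ∈ (x̄₁, x₁], t ∈ [x₂, x̄₂), and s·c₁′(s + p) > C > t·c₂′(t + q) for all such s, t and p ∈ (ȳ₁, M − W], q ∈ [0, ȳ₂). Then x₁·c₁(x₁ + y₁) + x₂·c₂(x₂ + y₂) > x̄₁·c₁(x̄₁ + ȳ₁) + x̄₂·c₂(x̄₂ + ȳ₂). -/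
/-!
The cost difference telescopes into four increments: the group's own weight moving on arc 1
and on arc 2 against the old opponents, then the opponents moving on each arc against the new
own weights. By the mean value theorem, the first two are governed by the marginal costs
`c (s + ȳ) + s c' (s + ȳ)`, which exceed `B` on arc 1 and stay below `B` on arc 2, and the last
two by the rates `s c' (s + p)`, which exceed `C` on arc 1 and stay below `C` on arc 2. Since
both arcs move by the same amounts, the arc-1 increase strictly outweighs the arc-2 saving.
-/

open Set

section MeanValue

variable {f f' : ℝ → ℝ} {a b K : ℝ}

lemma mul_sub_lt_sub_of_lt_hasDerivAt (hf : ∀ t, HasDerivAt f (f' t) t)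
    (hK : ∀ t ∈ Ioo a b, K < f' t) (hab : a < b) : K * (b - a) < f b - f a :=
  (convex_Icc a b).mul_sub_lt_image_sub_of_lt_deriv
    (fun t _ => (hf t).continuousAt.continuousWithinAt)
    (fun t _ => (hf t).differentiableAt.differentiableWithinAt)
    (by simpa only [interior_Icc, (hf _).deriv] using hK)
    a (left_mem_Icc.2 hab.le) b (right_mem_Icc.2 hab.le) hab

lemma sub_lt_mul_sub_of_hasDerivAt_lt (hf : ∀ t, HasDerivAt f (f' t) t)
    (hK : ∀ t ∈ Ioo a b, f' t < K) (hab : a < b) : f b - f a < K * (b - a) :=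
  (convex_Icc a b).image_sub_lt_mul_sub_of_deriv_lt
    (fun t _ => (hf t).continuousAt.continuousWithinAt)
    (fun t _ => (hf t).differentiableAt.differentiableWithinAt)
    (by simpa only [interior_Icc, (hf _).deriv] using hK)
    a (left_mem_Icc.2 hab.le) b (right_mem_Icc.2 hab.le) hab

lemma mul_sub_le_sub_of_le_hasDerivAt (hf : ∀ t, HasDerivAt f (f' t) t)
    (hK : ∀ t ∈ Ioo a b, K ≤ f' t) (hab : a ≤ b) : K * (b - a) ≤ f b - f a :=
  (convex_Icc a b).mul_sub_le_image_sub_of_le_deriv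
    (fun t _ => (hf t).continuousAt.continuousWithinAt)
    (fun t _ => (hf t).differentiableAt.differentiableWithinAt)
    (by simpa only [interior_Icc, (hf _).deriv] using hK)
    a (left_mem_Icc.2 hab) b (right_mem_Icc.2 hab) hab

lemma sub_le_mul_sub_of_hasDerivAt_le (hf : ∀ t, HasDerivAt f (f' t) t)
    (hK : ∀ t ∈ Ioo a b, f' t ≤ K) (hab : a ≤ b) : f b - f a ≤ K * (b - a) :=
  (convex_Icc a b).image_sub_le_mul_sub_of_deriv_le
    (fun t _ => (hf t).continuousAt.continuousWithinAt)
    (fun t _ => (hf t).differentiableAt.differentiableWithinAt)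
    (by simpa only [interior_Icc, (hf _).deriv] using hK)
    a (left_mem_Icc.2 hab) b (right_mem_Icc.2 hab) hab

end MeanValue

section ArcCost

variable {c : ℝ → ℝ} {c' s p : ℝ}

lemma hasDerivAt_mul_comp_add_const (hc : HasDerivAt c c' (s + p)) :
    HasDerivAt (fun s => s * c (s + p)) (c (s + p) + s * c') s := by
  simpa only [one_mul] using (hasDerivAt_id' (x := s)).fun_mul (hc.comp_add_const s p)

lemma hasDerivAt_const_mul_comp_const_add (hc : HasDerivAt c c' (s + p)) :
    HasDerivAt (fun p => s * c (s + p)) (s * c') p :=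
  (hc.comp_const_add s p).const_mul s

end ArcCost

theorem free_riding_cost_comparison_general
    (c₁ c₂ d₁ d₂ : ℝ → ℝ) (M W x₁ xbar₁ y₁ ybar₁ B C : ℝ)
    (hd₁ : ∀ t, HasDerivAt c₁ (d₁ t) t)
    (hd₂ : ∀ t, HasDerivAt c₂ (d₂ t) t)
    (hx : xbar₁ < x₁)
    (hy : ybar₁ ≤ y₁) (hy₂nn : 0 ≤ M - W - y₁)
    (hB1 : ∀ s ∈ Set.Ioc xbar₁ x₁, B < c₁ (s + ybar₁) + s * d₁ (s + ybar₁))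
    (hB2 : ∀ t ∈ Set.Ico (W - x₁) (W - xbar₁),
      c₂ (t + (M - W - ybar₁)) + t * d₂ (t + (M - W - ybar₁)) < B)
    (hC1 : ∀ s ∈ Set.Ioc xbar₁ x₁, ∀ p ∈ Set.Ioc ybar₁ (M - W), C < s * d₁ (s + p))
    (hC2 : ∀ t ∈ Set.Ico (W - x₁) (W - xbar₁), ∀ q ∈ Set.Ico (0:ℝ) (M - W - ybar₁),
      t * d₂ (t + q) < C) :
    xbar₁ * c₁ (xbar₁ + ybar₁) + (W - xbar₁) * c₂ ((W - xbar₁) + (M - W - ybar₁)) <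
      x₁ * c₁ (x₁ + y₁) + (W - x₁) * c₂ ((W - x₁) + (M - W - y₁)) := by
  have hx₂ : W - x₁ < W - xbar₁ := by linarith
  have own₁ : B * (x₁ - xbar₁) < x₁ * c₁ (x₁ + ybar₁) - xbar₁ * c₁ (xbar₁ + ybar₁) :=
    mul_sub_lt_sub_of_lt_hasDerivAt (fun _ => hasDerivAt_mul_comp_add_const (hd₁ _))
      (fun s hs => hB1 s ⟨hs.1, hs.2.le⟩) hx
  have own₂ : (W - xbar₁) * c₂ ((W - xbar₁) + (M - W - ybar₁)) -
      (W - x₁) * c₂ ((W - x₁) + (M - W - ybar₁)) < B * ((W - xbar₁) - (W - x₁)) :=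
    sub_lt_mul_sub_of_hasDerivAt_lt (fun _ => hasDerivAt_mul_comp_add_const (hd₂ _))
      (fun t ht => hB2 t ⟨ht.1.le, ht.2⟩) hx₂
  have others₁ : C * (y₁ - ybar₁) ≤ x₁ * c₁ (x₁ + y₁) - x₁ * c₁ (x₁ + ybar₁) :=
    mul_sub_le_sub_of_le_hasDerivAt (fun _ => hasDerivAt_const_mul_comp_const_add (hd₁ _))
      (fun p hp => (hC1 x₁ ⟨hx, le_rfl⟩ p ⟨hp.1, by linarith [hp.2]⟩).le) hy
  have others₂ : (W - x₁) * c₂ ((W - x₁) + (M - W - ybar₁)) -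
      (W - x₁) * c₂ ((W - x₁) + (M - W - y₁)) ≤ C * ((M - W - ybar₁) - (M - W - y₁)) :=
    sub_le_mul_sub_of_hasDerivAt_le (fun _ => hasDerivAt_const_mul_comp_const_add (hd₂ _))
      (fun q hq => (hC2 (W - x₁) ⟨le_rfl, hx₂⟩ q ⟨by linarith [hq.1], hq.2⟩).le)
      (by linarith)
  linarith

/-- core inequality of the free-riding comparison lemma: if the
decentralizing player's deputies put strictly more weight on the cheap arc while
the opponents weakly shift toward it, her total cost strictly increases. -/
theorem free_riding_cost_comparison
    (c₁ c₂ d₁ d₂ : ℝ → ℝ) (M W x₁ xbar₁ y₁ ybar₁ B C : ℝ)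
    (hc₁mono : StrictMonoOn c₁ (Set.Icc 0 M))
    (hc₂mono : StrictMonoOn c₂ (Set.Icc 0 M))
    (hc₁conv : ConvexOn ℝ (Set.Icc 0 M) c₁)
    (hc₂conv : ConvexOn ℝ (Set.Icc 0 M) c₂)
    (hd₁ : ∀ t, HasDerivAt c₁ (d₁ t) t)
    (hd₂ : ∀ t, HasDerivAt c₂ (d₂ t) t)
    (hx : xbar₁ < x₁) (hxbarnn : 0 ≤ xbar₁) (hx₂nn : 0 ≤ W - x₁)
    (hy : ybar₁ ≤ y₁) (hy₂nn : 0 ≤ M - W - y₁) (hybarnn : 0 ≤ ybar₁)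
    (hB : 0 < B) (hC : 0 < C)
    (hB1 : ∀ s ∈ Set.Ioc xbar₁ x₁, B < c₁ (s + ybar₁) + s * d₁ (s + ybar₁))
    (hB2 : ∀ t ∈ Set.Ico (W - x₁) (W - xbar₁),
      c₂ (t + (M - W - ybar₁)) + t * d₂ (t + (M - W - ybar₁)) < B)
    (hC1 : ∀ s ∈ Set.Ioc xbar₁ x₁, ∀ p ∈ Set.Ioc ybar₁ (M - W), C < s * d₁ (s + p))
    (hC2 : ∀ t ∈ Set.Ico (W - x₁) (W - xbar₁), ∀ q ∈ Set.Ico (0:ℝ) (M - W - ybar₁),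
      t * d₂ (t + q) < C) :
    xbar₁ * c₁ (xbar₁ + ybar₁) + (W - xbar₁) * c₂ ((W - xbar₁) + (M - W - ybar₁)) <
      x₁ * c₁ (x₁ + y₁) + (W - x₁) * c₂ ((W - x₁) + (M - W - y₁)) :=
  free_riding_cost_comparison_general c₁ c₂ d₁ d₂ M W x₁ xbar₁ y₁ ybar₁ B C hd₁ hd₂ hx hy hy₂nn hB1
    hB2 hC1 hC2
end
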